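/- Fix y ∈ ℝⁿ, X ∈ ℝ^{n×p} and λ > 0, and let ℓ, ℓ' ∈ {0,1,…,p} with ℓ < ℓ'. If β* is an optimal solution to both (TL_{λ,ℓ}) and (TL_{λ,ℓ'}), then ‖β*‖₀ ≤ ℓ, and β* is an optimal solution to (TL_{λ,j}) for every integer j with ℓ < j < ℓ'. -/

import Mathlib

open Finset

/-! If `‖β*‖₀ > ℓ`, let `i` index the `(ℓ + 1)`-th largest entry of `β*` in absolute value: it
is counted by `T_ℓ` but not by `T_ℓ'`. Shrinking `β*_i` by a factor `1 - s` lowers `T_ℓ` by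
`s |β*_i|`, while growing it by `1 + s` does not raise `T_ℓ'`. The first-order changes of the
least-squares loss along these two moves are opposite, so optimality for both problems gives
`λ s |β*_i| ≤ O(s²)` for small `s > 0`, whence `β*_i = 0`. Once `‖β*‖₀ ≤ ℓ`, all `T_j(β*)` with
`j ≥ ℓ` vanish, and `T_j ≥ T_ℓ'` for `j ≤ ℓ'` makes `β*` optimal for `(TL_{λ,j})`. -/

/-- Absolute values of the entries of `β`, sorted in increasing order. -/
noncomputable def sortAbs {p : ℕ} (β : Fin p → ℝ) : Fin p → ℝ :=
  fun i => |β (Tuple.sort (fun j => |β j|) i)|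

/-- The trimmed Lasso penalty `T_k(β)`: sum of the `p - k` smallest `|β_i|`. -/
noncomputable def trimmedLasso {p : ℕ} (k : ℕ) (β : Fin p → ℝ) : ℝ :=
  ∑ i ∈ Finset.univ.filter (fun i : Fin p => (i : ℕ) < p - k), sortAbs β i

/-- `‖β‖₀`: the number of nonzero entries of `β`. -/
noncomputable def l0 {p : ℕ} (β : Fin p → ℝ) : ℕ :=
  (Finset.univ.filter (fun i => β i ≠ 0)).card

/-- The objective of the trimmed Lasso problem `(TL_{λ,k})`. -/
noncomputable def tlObj {n p : ℕ} (y : Fin n → ℝ) (X : Matrix (Fin n) (Fin p) ℝ)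
    (lam : ℝ) (k : ℕ) (β : Fin p → ℝ) : ℝ :=
  (1 / 2) * (∑ i, (y i - X.mulVec β i) ^ 2) + lam * trimmedLasso k β

lemma Fin.val_le_of_strictMono {m p : ℕ} {g : Fin m → Fin p} (hg : StrictMono g) (r : Fin m) :
    (r : ℕ) ≤ g r := by
  simpa using card_le_card_of_injOn g (s := Iic r) (t := Iic (g r))
    (fun a ha => by simpa using hg.monotone (by simpa using ha)) hg.injective.injOn

lemma Fin.filter_val_lt_eq_map_castLEEmb {p m : ℕ} (h : m ≤ p) :
    (univ.filter fun i : Fin p => (i : ℕ) < m) = univ.map (Fin.castLEEmb h) := by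
  ext j
  simp only [mem_filter, mem_univ, true_and, mem_map, Fin.castLEEmb_apply]
  exact ⟨fun hj => ⟨⟨j, hj⟩, rfl⟩, by rintro ⟨a, rfl⟩; exact a.2⟩

lemma Monotone.sum_filter_val_lt_le_sum {M : Type*} [AddCommMonoid M] [PartialOrder M]
    [IsOrderedAddMonoid M] {p m : ℕ} {f : Fin p → M} (hf : Monotone f) {T : Finset (Fin p)}
    (hT : #T = m) :
    ∑ i ∈ univ.filter (fun i : Fin p => (i : ℕ) < m), f i ≤ ∑ i ∈ T, f i := by
  have hm : m ≤ p := hT ▸ (card_le_univ T).trans_eq (Fintype.card_fin p)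
  rw [Fin.filter_val_lt_eq_map_castLEEmb hm, ← T.map_orderEmbOfFin_univ hT, sum_map, sum_map]
  refine sum_le_sum fun r _ => hf ?_
  exact Fin.le_def.2 (Fin.val_le_of_strictMono (T.orderEmbOfFin hT).strictMono r)

lemma sum_sq_sub_mulVec_update {m ι : Type*} [Fintype m] [Fintype ι] [DecidableEq ι]
    (y : m → ℝ) (X : Matrix m ι ℝ) (β : ι → ℝ) (i : ι) (x : ℝ) :
    ∑ j, (y j - X.mulVec (Function.update β i x) j) ^ 2 =
      ∑ j, (y j - X.mulVec β j) ^ 2 - 2 * (x - β i) * ∑ j, (y j - X.mulVec β j) * X j i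
        + (x - β i) ^ 2 * ∑ j, X j i ^ 2 := by
  have hupdate : Function.update β i x = β + Pi.single i (x - β i) := by
    ext k
    rcases eq_or_ne k i with rfl | hk <;> simp_all
  have hmulVec : ∀ j, X.mulVec (Function.update β i x) j = X.mulVec β j + (x - β i) * X j i := by
    intro j
    simp [hupdate, Matrix.mulVec_add, Matrix.mulVec_single, mul_comm]
  simp only [hmulVec, mul_sum, ← sum_sub_distrib, ← sum_add_distrib]
  exact sum_congr rfl fun j _ => by ring

lemma nonpos_of_forall_mul_le_mul_sq {κ c : ℝ} (h : ∀ s, 0 < s → s ≤ 1 → κ * s ≤ c * s ^ 2) :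
    κ ≤ 0 := by
  by_contra! hκ
  have hpos : 0 < κ + |c| := by positivity
  set s := κ / (κ + |c|)
  have hs : 0 < s := div_pos hκ hpos
  have hs1 : s ≤ 1 := (div_le_one hpos).2 (le_add_of_nonneg_right (abs_nonneg c))
  have hκs : κ ≤ |c| * s := by
    have := h s hs hs1
    nlinarith [le_abs_self c]
  have : |c| * s < κ := by
    rw [mul_div_assoc', div_lt_iff₀ hpos]
    nlinarith
  linarith

section TrimmedLasso

variable {p : ℕ}

/-- Indices of the `p - k` entries of `β` of smallest absolute value, ties broken as by
`Tuple.sort`. -/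
noncomputable def trimmedIndices (k : ℕ) (β : Fin p → ℝ) : Finset (Fin p) :=
  (univ.filter fun t : Fin p => (t : ℕ) < p - k).map (Tuple.sort fun j => |β j|).toEmbedding

lemma mem_trimmedIndices {k : ℕ} {β : Fin p → ℝ} {j : Fin p} :
    j ∈ trimmedIndices k β ↔ ((Tuple.sort fun j => |β j|).symm j : ℕ) < p - k := by
  simp [trimmedIndices]

lemma card_trimmedIndices (k : ℕ) (β : Fin p → ℝ) : #(trimmedIndices k β) = p - k := by
  simp [trimmedIndices, Fin.card_filter_val_lt]

lemma trimmedLasso_eq_sum_trimmedIndices (k : ℕ) (β : Fin p → ℝ) :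
    trimmedLasso k β = ∑ j ∈ trimmedIndices k β, |β j| := by
  rw [trimmedIndices, sum_map]
  rfl

lemma trimmedLasso_le_sum (β : Fin p → ℝ) {k : ℕ} {S : Finset (Fin p)} (hS : #S = p - k) :
    trimmedLasso k β ≤ ∑ j ∈ S, |β j| := by
  set σ := Tuple.sort fun j => |β j|
  have hsum : ∑ j ∈ S, |β j| = ∑ t ∈ S.map σ.symm.toEmbedding, sortAbs β t := by
    simp [sortAbs, σ]
  rw [hsum, trimmedLasso]
  exact (Tuple.monotone_sort fun j => |β j|).sum_filter_val_lt_le_sum (by rw [card_map, hS])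

lemma trimmedLasso_antitone (β : Fin p → ℝ) : Antitone fun k => trimmedLasso k β := by
  intro k k' hk
  refine sum_le_sum_of_subset_of_nonneg (fun i hi => ?_) fun i _ _ => abs_nonneg _
  simp only [mem_filter, mem_univ, true_and] at hi ⊢
  omega

lemma trimmedLasso_eq_zero_of_l0_le {β : Fin p → ℝ} {k : ℕ} (hk : l0 β ≤ k) :
    trimmedLasso k β = 0 := by
  have hzeros : p - k ≤ #(univ.filter fun j => β j = 0) := by
    have := card_filter_add_card_filter_not (s := univ) (p := fun j : Fin p => β j = 0)
    rw [card_univ, Fintype.card_fin] at this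
    simp only [l0, ne_eq] at hk
    omega
  obtain ⟨S, hSzero, hS⟩ := exists_subset_card_eq hzeros
  have hsum : ∑ j ∈ S, |β j| = 0 :=
    sum_eq_zero fun j hj => by simpa using (mem_filter.1 (hSzero hj)).2
  exact le_antisymm (hsum ▸ trimmedLasso_le_sum β hS) (sum_nonneg fun _ _ => abs_nonneg _)

lemma l0_le_of_forall_mem_trimmedIndices {β : Fin p → ℝ} {k : ℕ}
    (h : ∀ j ∈ trimmedIndices k β, β j = 0) : l0 β ≤ k := by
  have hsub : (univ.filter fun j => β j ≠ 0) ⊆ (trimmedIndices k β)ᶜ :=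
    fun j hj => mem_compl.2 fun hmem => (mem_filter.1 hj).2 (h j hmem)
  have := card_le_card hsub
  rw [card_compl, Fintype.card_fin, card_trimmedIndices] at this
  rw [l0]
  omega

lemma exists_ne_zero_mem_trimmedIndices_notMem {β : Fin p → ℝ} {ℓ ℓ' : ℕ} (hl0 : ℓ < l0 β)
    (hℓ : ℓ < ℓ') :
    ∃ i, β i ≠ 0 ∧ i ∈ trimmedIndices ℓ β ∧ i ∉ trimmedIndices ℓ' β := by
  set σ := Tuple.sort fun j => |β j|
  obtain ⟨j, hj, hβj⟩ : ∃ j ∈ trimmedIndices ℓ β, β j ≠ 0 := by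
    by_contra! h
    exact hl0.not_ge (l0_le_of_forall_mem_trimmedIndices h)
  have hjpos : ((σ.symm j : Fin p) : ℕ) < p - ℓ := mem_trimmedIndices.1 hj
  set q : Fin p := ⟨p - ℓ - 1, by omega⟩
  have hjq : σ.symm j ≤ q := Fin.le_def.2 (by simp only [q]; omega)
  have habs : |β j| ≤ |β (σ q)| := by
    simpa [σ] using Tuple.monotone_sort (fun j => |β j|) hjq
  refine ⟨σ q, ?_, ?_, ?_⟩
  · exact abs_pos.1 ((abs_pos.2 hβj).trans_le habs)
  · rw [mem_trimmedIndices, Equiv.symm_apply_apply]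
    simp only [q]
    omega
  · rw [mem_trimmedIndices, Equiv.symm_apply_apply]
    simp only [q]
    omega

lemma trimmedLasso_update_le_of_mem {k : ℕ} {β : Fin p → ℝ} {i : Fin p}
    (hi : i ∈ trimmedIndices k β) (x : ℝ) :
    trimmedLasso k (Function.update β i x) ≤ trimmedLasso k β - |β i| + |x| := by
  have h := trimmedLasso_le_sum (Function.update β i x) (card_trimmedIndices k β)
  simp only [Function.apply_update (fun _ => abs), sum_update_of_mem hi] at h
  rw [trimmedLasso_eq_sum_trimmedIndices k β, sum_eq_add_sum_sdiff_singleton_of_mem hi]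
  linarith

lemma trimmedLasso_update_le_of_notMem {k : ℕ} {β : Fin p → ℝ} {i : Fin p}
    (hi : i ∉ trimmedIndices k β) (x : ℝ) :
    trimmedLasso k (Function.update β i x) ≤ trimmedLasso k β := by
  have h := trimmedLasso_le_sum (Function.update β i x) (card_trimmedIndices k β)
  simp only [Function.apply_update (fun _ => abs), sum_update_of_notMem hi] at h
  rwa [trimmedLasso_eq_sum_trimmedIndices k β]

end TrimmedLasso

section Objective

variable {n p : ℕ} {y : Fin n → ℝ} {X : Matrix (Fin n) (Fin p) ℝ} {lam : ℝ}

lemma tlObj_antitone (hlam : 0 ≤ lam) (β : Fin p → ℝ) : Antitone fun k => tlObj y X lam k β :=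
  fun _ _ hk => by
    simp only [tlObj]
    gcongr
    exact trimmedLasso_antitone β hk

lemma tlObj_eq_of_l0_le {β : Fin p → ℝ} {k k' : ℕ} (hk : l0 β ≤ k) (hk' : l0 β ≤ k') :
    tlObj y X lam k β = tlObj y X lam k' β := by
  simp only [tlObj, trimmedLasso_eq_zero_of_l0_le hk, trimmedLasso_eq_zero_of_l0_le hk']

lemma eq_zero_of_optimal_of_mem_trimmedIndices (hlam : 0 < lam) {ℓ ℓ' : ℕ} {βs : Fin p → ℝ}
    (hopt : ∀ β, tlObj y X lam ℓ βs ≤ tlObj y X lam ℓ β)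
    (hopt' : ∀ β, tlObj y X lam ℓ' βs ≤ tlObj y X lam ℓ' β) {i : Fin p}
    (hi : i ∈ trimmedIndices ℓ βs) (hi' : i ∉ trimmedIndices ℓ' βs) : βs i = 0 := by
  set w := βs i
  set b := ∑ j, (y j - X.mulVec βs j) * X j i
  set c := ∑ j, X j i ^ 2
  have hdown : ∀ s, 0 < s → s ≤ 1 → lam * |w| * s ≤ s * w * b + c * w ^ 2 / 2 * s ^ 2 := by
    intro s _ hs1
    have h := hopt (Function.update βs i ((1 - s) * w))
    have hpen := trimmedLasso_update_le_of_mem hi ((1 - s) * w)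
    rw [abs_mul, abs_of_nonneg (sub_nonneg.2 hs1)] at hpen
    simp only [tlObj, sum_sq_sub_mulVec_update] at h
    linarith [mul_le_mul_of_nonneg_left hpen hlam.le]
  have hup : ∀ s, 0 ≤ -(s * w * b) + c * w ^ 2 / 2 * s ^ 2 := by
    intro s
    have h := hopt' (Function.update βs i ((1 + s) * w))
    have hpen := trimmedLasso_update_le_of_notMem hi' ((1 + s) * w)
    simp only [tlObj, sum_sq_sub_mulVec_update] at h
    linarith [mul_le_mul_of_nonneg_left hpen hlam.le]
  have hκ : lam * |w| ≤ 0 := nonpos_of_forall_mul_le_mul_sq (c := c * w ^ 2)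
    fun s hs hs1 => by linarith [hdown s hs hs1, hup s]
  exact abs_eq_zero.1 (le_antisymm (nonpos_of_mul_nonpos_right hκ hlam) (abs_nonneg w))

end Objective

theorem tl_optimal_between_general {n p : ℕ} (y : Fin n → ℝ) (X : Matrix (Fin n) (Fin p) ℝ)
    (lam : ℝ) (hlam : 0 < lam) (ℓ ℓ' : ℕ) (hℓ : ℓ < ℓ')
    (βs : Fin p → ℝ)
    (hopt : ∀ β, tlObj y X lam ℓ βs ≤ tlObj y X lam ℓ β)
    (hopt' : ∀ β, tlObj y X lam ℓ' βs ≤ tlObj y X lam ℓ' β) :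
    l0 βs ≤ ℓ ∧ ∀ j : ℕ, ℓ < j → j < ℓ' →
      ∀ β, tlObj y X lam j βs ≤ tlObj y X lam j β := by
  have hl0 : l0 βs ≤ ℓ := by
    by_contra! h
    obtain ⟨i, hne, hi, hi'⟩ := exists_ne_zero_mem_trimmedIndices_notMem h hℓ
    exact hne (eq_zero_of_optimal_of_mem_trimmedIndices hlam hopt hopt' hi hi')
  refine ⟨hl0, fun j hj hj' β => ?_⟩
  calc tlObj y X lam j βs = tlObj y X lam ℓ' βs := tlObj_eq_of_l0_le (by omega) (by omega)
    _ ≤ tlObj y X lam ℓ' β := hopt' β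
    _ ≤ tlObj y X lam j β := tlObj_antitone hlam.le β hj'.le

/-- Lemma 4.1(b): if `β*` is optimal for both `(TL_{λ,ℓ})` and
`(TL_{λ,ℓ'})` with `ℓ < ℓ'`, then `‖β*‖₀ ≤ ℓ` and `β*` is optimal for
`(TL_{λ,j})` for every `j` with `ℓ < j < ℓ'`. -/
theorem tl_optimal_between {n p : ℕ} (y : Fin n → ℝ) (X : Matrix (Fin n) (Fin p) ℝ)
    (lam : ℝ) (hlam : 0 < lam) (ℓ ℓ' : ℕ) (hℓ : ℓ < ℓ') (hℓ' : ℓ' ≤ p)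
    (βs : Fin p → ℝ)
    (hopt : ∀ β, tlObj y X lam ℓ βs ≤ tlObj y X lam ℓ β)
    (hopt' : ∀ β, tlObj y X lam ℓ' βs ≤ tlObj y X lam ℓ' β) :
    l0 βs ≤ ℓ ∧ ∀ j : ℕ, ℓ < j → j < ℓ' →
      ∀ β, tlObj y X lam j βs ≤ tlObj y X lam j β :=
  tl_optimal_between_general y X lam hlam ℓ ℓ' hℓ βs hopt hopt'
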